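/- Let m > 0 and let Ψ be any Lipschitz function on ℝ³ with Lipschitz constant ζ ≤ m/2. Then for each s ≥ 0 the operator e^Ψ (s + K²)^{−1} e^{−Ψ} is bounded on L²(ℝ³), with operator norm ‖e^Ψ (s + K²)^{−1} e^{−Ψ}‖ ≤ 4(m² + s)^{−1}, where K = √(−Δ + m²). -/

import Mathlib

noncomputable section

open MeasureTheory Filter Topology Complex
open scoped ENNReal NNReal

namespace HFBYukawa

/-- Physical space `ℝ³`. -/
abbrev E3 : Type := EuclideanSpace ℝ (Fin 3)

/-- The operator `e^Ψ (s + K²)⁻¹ e^{-Ψ}`, where `K = √(-Δ+m²)`, so that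
`(s + K²)⁻¹` is the integral operator with the explicit Yukawa-type kernel
`e^{-√(m²+s)|x-y|}/(4π|x-y|)`. -/
def conjResolvent (m s : ℝ) (Ψ : E3 → ℝ) (ψ : E3 → ℂ) (x : E3) : ℂ :=
  ((Real.exp (Ψ x) : ℝ) : ℂ) *
    ∫ y : E3,
      ((Real.exp (-(Real.sqrt (m ^ 2 + s)) * ‖x - y‖) /
          (4 * Real.pi * ‖x - y‖) : ℝ) : ℂ) *
        ((Real.exp (-Ψ y) : ℝ) : ℂ) * ψ y

open Set Metric in
/-- Polar-coordinates formula for Lebesgue integrals of radial functions on `ℝ³`. -/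
lemma lintegral_fun_norm_E3 (f : ℝ → ℝ≥0∞) (hf : Measurable f) :
    ∫⁻ x : E3, f ‖x‖ = (volume : Measure E3).toSphere univ *
      ∫⁻ y in Ioi (0:ℝ), ENNReal.ofReal (y ^ 2) * f y := by
  have hdim : Module.finrank ℝ E3 = 3 := by
    simp [finrank_euclideanSpace]
  have hmeas : Measurable fun p : sphere (0:E3) 1 × Ioi (0:ℝ) => f p.2 :=
    hf.comp (measurable_subtype_coe.comp measurable_snd)
  calc ∫⁻ x : E3, f ‖x‖
      = ∫⁻ x : ({(0:E3)}ᶜ : Set E3), f ‖x.1‖ ∂((volume : Measure E3).comap (↑)) := by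
        rw [lintegral_subtype_comap (measurableSet_singleton (0:E3)).compl
          (fun z => f ‖z‖), restrict_compl_singleton]
    _ = ∫⁻ p : sphere (0:E3) 1 × Ioi (0:ℝ), f p.2
          ∂((volume : Measure E3).toSphere.prod
            (.volumeIoiPow (Module.finrank ℝ E3 - 1))) := by
        rw [← (volume : Measure E3).measurePreserving_homeomorphUnitSphereProd.lintegral_comp
          hmeas]
        exact lintegral_congr fun x => by
          rw [homeomorphUnitSphereProd_apply_snd_coe]
    _ = (volume : Measure E3).toSphere univ *
          ∫⁻ y : Ioi (0:ℝ), f y ∂(.volumeIoiPow 2) := by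
        rw [hdim]
        rw [lintegral_prod _ hmeas.aemeasurable]
        simp [lintegral_const, mul_comm]
    _ = (volume : Measure E3).toSphere univ *
          ∫⁻ y in Ioi (0:ℝ), ENNReal.ofReal (y ^ 2) * f y := by
        congr 1
        rw [Measure.volumeIoiPow,
          lintegral_withDensity_eq_lintegral_mul _
            ((measurable_subtype_coe.pow_const 2).ennreal_ofReal)
            (g := fun y : Set.Ioi (0:ℝ) => f y) (hf.comp measurable_subtype_coe)]
        exact lintegral_subtype_comap measurableSet_Ioi
          (fun y => ENNReal.ofReal (y ^ 2) * f y)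

open Set Metric in
lemma toSphere_univ_E3 :
    (volume : Measure E3).toSphere univ = ENNReal.ofReal (4 * Real.pi) := by
  have hdim : Module.finrank ℝ E3 = 3 := by simp [finrank_euclideanSpace]
  rw [Measure.toSphere_apply_univ, hdim, EuclideanSpace.volume_ball]
  have hΓ : Real.Gamma ((Fintype.card (Fin 3) : ℝ) / 2 + 1) = 3 / 4 * Real.sqrt Real.pi := by
    have h1 : ((Fintype.card (Fin 3) : ℝ) / 2 + 1) = 3 / 2 + 1 := by norm_num
    rw [h1, Real.Gamma_add_one (by norm_num), show (3/2 : ℝ) = 1/2 + 1 by norm_num,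
      Real.Gamma_add_one (by norm_num), Real.Gamma_one_half_eq]
    ring
  have hπ : Real.sqrt Real.pi ^ Fintype.card (Fin 3) /
      Real.Gamma ((Fintype.card (Fin 3) : ℝ) / 2 + 1) = 4 / 3 * Real.pi := by
    rw [hΓ]
    have h2 : Real.sqrt Real.pi ^ (3:ℕ) =
        Real.pi * Real.sqrt Real.pi := by
      rw [pow_succ, sq, Real.mul_self_sqrt Real.pi_pos.le]
    have h3 : Real.sqrt Real.pi ≠ 0 :=
      ne_of_gt (Real.sqrt_pos.2 Real.pi_pos)
    rw [show Fintype.card (Fin 3) = 3 from rfl, h2]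
    field_simp
  rw [hπ]
  rw [ENNReal.ofReal_one, one_pow, one_mul]
  have h3 : ((3:ℕ) : ℝ≥0∞) = ENNReal.ofReal (3:ℝ) := by
    rw [ENNReal.ofReal_ofNat]
    norm_num
  rw [h3, ← ENNReal.ofReal_mul (by norm_num)]
  congr 1
  ring

lemma lintegral_yukawa (a : ℝ) (ha : 0 < a) :
    ∫⁻ z : E3, ENNReal.ofReal (Real.exp (-a * ‖z‖) / (4 * Real.pi * ‖z‖)) =
      ENNReal.ofReal ((a ^ 2)⁻¹) := by
  have hmeas : Measurable fun y : ℝ =>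
      ENNReal.ofReal (Real.exp (-a * y) / (4 * Real.pi * y)) := by
    exact ((Real.measurable_exp.comp (measurable_id.const_mul _)).div
      ((measurable_id.const_mul _))).ennreal_ofReal
  rw [lintegral_fun_norm_E3 _ hmeas, toSphere_univ_E3]
  have hcong : ∀ y ∈ Set.Ioi (0:ℝ),
      ENNReal.ofReal (y ^ 2) * ENNReal.ofReal (Real.exp (-a * y) / (4 * Real.pi * y)) =
        ENNReal.ofReal ((4 * Real.pi)⁻¹) * ENNReal.ofReal (y * Real.exp (-a * y)) := by
    intro y hy
    have hy0 : (0:ℝ) < y := hy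
    rw [← ENNReal.ofReal_mul (sq_nonneg y), ← ENNReal.ofReal_mul (by positivity)]
    congr 1
    field_simp
  rw [setLIntegral_congr_fun measurableSet_Ioi hcong]
  rw [lintegral_const_mul' _ _ ENNReal.ofReal_ne_top]
  have hint : IntegrableOn (fun y : ℝ => y * Real.exp (-a * y)) (Set.Ioi 0) := by
    have := integrableOn_rpow_mul_exp_neg_mul_rpow (p := 1) (s := 1) (b := a)
      (by norm_num) zero_lt_one ha
    refine this.congr_fun (fun y hy => ?_) measurableSet_Ioi
    simp only [Real.rpow_one]
  have hval : ∫ y in Set.Ioi (0:ℝ), y * Real.exp (-a * y) = (a ^ 2)⁻¹ := by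
    have := Real.integral_rpow_mul_exp_neg_mul_Ioi (a := 2) (r := a) (by norm_num) ha
    have hΓ2 : Real.Gamma 2 = 1 := by
      rw [show (2:ℝ) = 1 + 1 by norm_num, Real.Gamma_add_one one_ne_zero,
        Real.Gamma_one, mul_one]
    rw [hΓ2] at this
    have hcg : ∀ y ∈ Set.Ioi (0:ℝ),
        y ^ (2 - 1 : ℝ) * Real.exp (-(a * y)) = y * Real.exp (-a * y) := by
      intro y hy
      rw [show (2 - 1 : ℝ) = 1 by norm_num, Real.rpow_one, neg_mul]
    rw [setIntegral_congr_fun measurableSet_Ioi hcg] at this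
    rw [this, one_div, mul_one,
      show (2:ℝ) = ((2:ℕ):ℝ) by norm_num, Real.rpow_natCast, inv_pow]
  have hnn : 0 ≤ᵐ[volume.restrict (Set.Ioi (0:ℝ))]
      fun y : ℝ => y * Real.exp (-a * y) := by
    filter_upwards [ae_restrict_mem measurableSet_Ioi] with y hy
    exact mul_nonneg (le_of_lt hy) (Real.exp_pos _).le
  rw [← ofReal_integral_eq_lintegral_ofReal hint hnn, hval]
  rw [← ENNReal.ofReal_mul (by positivity), ← ENNReal.ofReal_mul (by positivity)]
  congr 1
  have h4π : (4 * Real.pi) ≠ 0 := by positivity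
  field_simp

/-- Lemma 3.3. Let `m > 0` and let `Ψ` be Lipschitz on `ℝ³` with
Lipschitz constant `ζ ≤ m/2`. Then for each `s ≥ 0` the operator
`e^Ψ (s + K²)⁻¹ e^{-Ψ}` is bounded on `L²(ℝ³)` with operator norm at most
`4 (m² + s)⁻¹`. -/
theorem conjugated_resolvent_bound
    (m : ℝ) (hm : 0 < m) (ζ : ℝ) (hζ : ζ ≤ m / 2) (hζ0 : 0 ≤ ζ)
    (Ψ : E3 → ℝ) (hΨ : LipschitzWith (Real.toNNReal ζ) Ψ)
    (s : ℝ) (hs : 0 ≤ s) :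
    ∀ ψ : E3 → ℂ, MemLp ψ 2 volume →
      MemLp (conjResolvent m s Ψ ψ) 2 volume ∧
      eLpNorm (conjResolvent m s Ψ ψ) 2 volume ≤
        ENNReal.ofReal (4 * (m ^ 2 + s)⁻¹) * eLpNorm ψ 2 volume := by
  -- notation
  set b : ℝ := Real.sqrt (m ^ 2 + s) with hb_def
  have hms : (0:ℝ) < m ^ 2 + s := by positivity
  have hb0 : 0 < b := Real.sqrt_pos.2 hms
  have hbm : m ≤ b := by
    have : m = Real.sqrt (m ^ 2) := by
      rw [Real.sqrt_sq hm.le]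
    rw [this]
    exact Real.sqrt_le_sqrt (by linarith)
  set a : ℝ := b / 2 with ha_def
  have ha0 : 0 < a := by positivity
  have ha2 : ((a ^ 2)⁻¹ : ℝ) = 4 * (m ^ 2 + s)⁻¹ := by
    have hbsq : b ^ 2 = m ^ 2 + s := Real.sq_sqrt hms.le
    have : a ^ 2 = (m ^ 2 + s) / 4 := by
      rw [ha_def, div_pow, hbsq]
      norm_num
    rw [this]
    field_simp
  set I : ℝ≥0∞ := ENNReal.ofReal (4 * (m ^ 2 + s)⁻¹) with hI_def
  have hI_ne_top : I ≠ ∞ := ENNReal.ofReal_ne_top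
  -- the dominating radial kernel
  set G : E3 → ℝ≥0∞ :=
    fun z => ENNReal.ofReal (Real.exp (-a * ‖z‖) / (4 * Real.pi * ‖z‖)) with hG_def
  have hGmeas : Measurable G := by
    exact ((Real.measurable_exp.comp (measurable_norm.const_mul _)).div
      (measurable_norm.const_mul _)).ennreal_ofReal
  have hGI : ∫⁻ z, G z = I := by
    rw [hG_def]
    rw [lintegral_yukawa a ha0, ha2]
  have hGne : ∀ z, G z ≠ ∞ := fun z => ENNReal.ofReal_ne_top
  -- translation invariance
  have hGx : ∀ x : E3, ∫⁻ y, G (x - y) = I := by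
    intro x
    have h1 : ∫⁻ y, G (x - y) = ∫⁻ y, G (x + y) := by
      have := (Measure.measurePreserving_neg (volume : Measure E3)).lintegral_comp
        (f := fun y => G (x + y)) (hGmeas.comp (measurable_const.add measurable_id))
      calc ∫⁻ y, G (x - y) = ∫⁻ y, G (x + -y) := by
            simp only [sub_eq_add_neg]
        _ = ∫⁻ y, G (x + y) := this
    rw [h1, lintegral_add_left_eq_self (fun y => G y) x, hGI]
  have hGy : ∀ y : E3, ∫⁻ x, G (x - y) = I := by
    intro y
    rw [lintegral_sub_right_eq_self (fun x => G x) y, hGI]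
  -- the real kernel inequality
  have hker : ∀ x y : E3,
      Real.exp (Ψ x) * (Real.exp (-b * ‖x - y‖) / (4 * Real.pi * ‖x - y‖) *
        Real.exp (-Ψ y)) ≤ Real.exp (-a * ‖x - y‖) / (4 * Real.pi * ‖x - y‖) := by
    intro x y
    set r : ℝ := ‖x - y‖ with hr_def
    have hr0 : 0 ≤ r := norm_nonneg _
    rcases eq_or_lt_of_le hr0 with hr | hr
    · rw [← hr]
      simp
    · have hΨxy : Ψ x - Ψ y ≤ a * r := by
        have h1 := hΨ.dist_le_mul x y
        rw [Real.dist_eq, Real.coe_toNNReal ζ hζ0, dist_eq_norm] at h1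
        have h2 : Ψ x - Ψ y ≤ ζ * r := le_trans (le_abs_self _) h1
        have h3 : ζ * r ≤ a * r := by
          apply mul_le_mul_of_nonneg_right _ hr0
          rw [ha_def]
          linarith
        linarith
      have hnum : Real.exp (Ψ x) * Real.exp (-b * r) * Real.exp (-Ψ y)
          ≤ Real.exp (-a * r) := by
        rw [← Real.exp_add, ← Real.exp_add, Real.exp_le_exp]
        have : a - b = -a := by rw [ha_def]; ring
        nlinarith
      have hden : (0:ℝ) < 4 * Real.pi * r := by positivity
      rw [div_mul_eq_mul_div, mul_div_assoc', div_le_div_iff_of_pos_right hden]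
      calc Real.exp (Ψ x) * (Real.exp (-b * r) * Real.exp (-Ψ y))
          = Real.exp (Ψ x) * Real.exp (-b * r) * Real.exp (-Ψ y) := by ring
        _ ≤ Real.exp (-a * r) := hnum
  -- reduce to a strongly measurable representative
  intro ψ hψ
  obtain ⟨ψ', hψ'm, hae⟩ : ∃ ψ' : E3 → ℂ, StronglyMeasurable ψ' ∧ ψ =ᵐ[volume] ψ' :=
    ⟨hψ.1.mk ψ, hψ.1.stronglyMeasurable_mk, hψ.1.ae_eq_mk⟩
  have hψ' : MemLp ψ' 2 volume := hψ.ae_eq hae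
  have hTeq : conjResolvent m s Ψ ψ = conjResolvent m s Ψ ψ' := by
    funext x
    unfold conjResolvent
    congr 1
    refine integral_congr_ae ?_
    filter_upwards [hae] with y hy
    rw [hy]
  set T : E3 → ℂ := conjResolvent m s Ψ ψ' with hT_def
  -- measurability of T
  have hkerm : StronglyMeasurable fun p : E3 × E3 =>
      ((Real.exp (-b * ‖p.1 - p.2‖) / (4 * Real.pi * ‖p.1 - p.2‖) : ℝ) : ℂ) *
        ((Real.exp (-Ψ p.2) : ℝ) : ℂ) * ψ' p.2 := by
    apply Measurable.stronglyMeasurable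
    have hn : Measurable fun p : E3 × E3 => ‖p.1 - p.2‖ :=
      (measurable_fst.sub measurable_snd).norm
    exact ((Complex.measurable_ofReal.comp
        ((Real.measurable_exp.comp (hn.const_mul _)).div (hn.const_mul _))).mul
      (Complex.measurable_ofReal.comp
        (Real.measurable_exp.comp (hΨ.continuous.measurable.comp measurable_snd).neg))).mul
      (hψ'm.measurable.comp measurable_snd)
  have hTm : AEStronglyMeasurable T volume := by
    rw [hT_def]
    unfold conjResolvent
    exact ((Complex.measurable_ofReal.comp
        (Real.measurable_exp.comp hΨ.continuous.measurable)).stronglyMeasurable.mul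
      hkerm.integral_prod_right').aestronglyMeasurable
  -- pointwise bound
  have hpt : ∀ x : E3, (‖T x‖₊ : ℝ≥0∞) ≤ ∫⁻ y, G (x - y) * ‖ψ' y‖₊ := by
    intro x
    have h1 : (‖T x‖₊ : ℝ≥0∞) = ENNReal.ofReal (Real.exp (Ψ x)) *
        ‖∫ y : E3, ((Real.exp (-b * ‖x - y‖) / (4 * Real.pi * ‖x - y‖) : ℝ) : ℂ) *
          ((Real.exp (-Ψ y) : ℝ) : ℂ) * ψ' y‖₊ := by
      rw [hT_def]
      unfold conjResolvent
      rw [nnnorm_mul, ENNReal.coe_mul]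
      congr 1
      rw [← Real.enorm_eq_ofReal (Real.exp_pos _).le, Complex.nnnorm_real, enorm_eq_nnnorm]
    rw [h1]
    calc ENNReal.ofReal (Real.exp (Ψ x)) * ↑‖∫ y : E3,
          ((Real.exp (-b * ‖x - y‖) / (4 * Real.pi * ‖x - y‖) : ℝ) : ℂ) *
            ((Real.exp (-Ψ y) : ℝ) : ℂ) * ψ' y‖₊
        ≤ ENNReal.ofReal (Real.exp (Ψ x)) * ∫⁻ y,
            ‖((Real.exp (-b * ‖x - y‖) / (4 * Real.pi * ‖x - y‖) : ℝ) : ℂ) *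
              ((Real.exp (-Ψ y) : ℝ) : ℂ) * ψ' y‖₊ :=
          mul_le_mul_right (enorm_integral_le_lintegral_enorm _) _
      _ = ∫⁻ y, ENNReal.ofReal (Real.exp (Ψ x)) *
            ‖((Real.exp (-b * ‖x - y‖) / (4 * Real.pi * ‖x - y‖) : ℝ) : ℂ) *
              ((Real.exp (-Ψ y) : ℝ) : ℂ) * ψ' y‖₊ :=
          (lintegral_const_mul' _ _ ENNReal.ofReal_ne_top).symm
      _ ≤ ∫⁻ y, G (x - y) * ‖ψ' y‖₊ := by
          refine lintegral_mono fun y => ?_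
          have hk0 : (0:ℝ) ≤ Real.exp (-b * ‖x - y‖) / (4 * Real.pi * ‖x - y‖) :=
            div_nonneg (Real.exp_pos _).le (by positivity)
          rw [nnnorm_mul, nnnorm_mul, ENNReal.coe_mul, ENNReal.coe_mul]
          have h2 : (‖((Real.exp (-b * ‖x - y‖) / (4 * Real.pi * ‖x - y‖) : ℝ) : ℂ)‖₊ : ℝ≥0∞)
              = ENNReal.ofReal (Real.exp (-b * ‖x - y‖) / (4 * Real.pi * ‖x - y‖)) := by
            rw [← Real.enorm_eq_ofReal hk0, Complex.nnnorm_real, enorm_eq_nnnorm]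
          have h3 : (‖((Real.exp (-Ψ y) : ℝ) : ℂ)‖₊ : ℝ≥0∞)
              = ENNReal.ofReal (Real.exp (-Ψ y)) := by
            rw [← Real.enorm_eq_ofReal (Real.exp_pos _).le, Complex.nnnorm_real, enorm_eq_nnnorm]
          rw [h2, h3]
          have hre : ENNReal.ofReal (Real.exp (Ψ x)) *
              (ENNReal.ofReal (Real.exp (-b * ‖x - y‖) / (4 * Real.pi * ‖x - y‖)) *
                ENNReal.ofReal (Real.exp (-Ψ y)) * ↑‖ψ' y‖₊) =
              ENNReal.ofReal (Real.exp (Ψ x) *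
                (Real.exp (-b * ‖x - y‖) / (4 * Real.pi * ‖x - y‖) *
                  Real.exp (-Ψ y))) * ↑‖ψ' y‖₊ := by
            rw [← ENNReal.ofReal_mul hk0, ← mul_assoc,
              ← ENNReal.ofReal_mul (Real.exp_pos _).le]
          rw [hre]
          exact mul_le_mul_left (ENNReal.ofReal_le_ofReal (hker x y)) _
  -- auxiliary square-root facts in ℝ≥0∞
  have hsq : ∀ t : ℝ≥0∞, (t ^ (1/2 : ℝ)) ^ (2 : ℝ) = t := by
    intro t
    rw [← ENNReal.rpow_mul]
    norm_num
  have hsq' : ∀ t : ℝ≥0∞, t ^ (1/2 : ℝ) * t ^ (1/2 : ℝ) = t := by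
    intro t
    rw [← ENNReal.rpow_add_of_nonneg _ _ (by norm_num) (by norm_num)]
    norm_num
  -- Schur / Cauchy–Schwarz bound for each x
  have hH : ∀ x : E3, ∫⁻ y, G (x - y) * ‖ψ' y‖₊ ≤
      I ^ (1/2 : ℝ) * (∫⁻ y, G (x - y) * (‖ψ' y‖₊ : ℝ≥0∞) ^ (2:ℝ)) ^ (1/2 : ℝ) := by
    intro x
    have hGxm : Measurable fun y : E3 => G (x - y) :=
      hGmeas.comp (measurable_const.sub measurable_id)
    have hψm : Measurable fun y : E3 => (‖ψ' y‖₊ : ℝ≥0∞) :=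
      hψ'm.measurable.enorm
    have hconj : Real.HolderConjugate 2 2 := Real.HolderConjugate.two_two
    have := ENNReal.lintegral_mul_le_Lp_mul_Lq (volume : Measure E3) hconj
      (f := fun y => (G (x - y)) ^ (1/2 : ℝ))
      (g := fun y => (G (x - y)) ^ (1/2 : ℝ) * ‖ψ' y‖₊)
      (hGxm.pow_const _).aemeasurable
      ((hGxm.pow_const _).mul hψm).aemeasurable
    have heq1 : ∀ y : E3, (G (x - y)) ^ (1/2 : ℝ) *
        ((G (x - y)) ^ (1/2 : ℝ) * ‖ψ' y‖₊) = G (x - y) * ‖ψ' y‖₊ := by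
      intro y
      rw [← mul_assoc, hsq']
    have heq2 : (∫⁻ y, ((G (x - y)) ^ (1/2 : ℝ)) ^ (2:ℝ)) ^ (1/(2:ℝ)) = I ^ (1/2 : ℝ) := by
      congr 1
      calc ∫⁻ y, ((G (x - y)) ^ (1/2 : ℝ)) ^ (2:ℝ) = ∫⁻ y, G (x - y) := by
            refine lintegral_congr fun y => hsq _
        _ = I := hGx x
    have heq3 : (∫⁻ y, ((G (x - y)) ^ (1/2 : ℝ) * ‖ψ' y‖₊) ^ (2:ℝ)) ^ (1/(2:ℝ)) =
        (∫⁻ y, G (x - y) * (‖ψ' y‖₊ : ℝ≥0∞) ^ (2:ℝ)) ^ (1/2 : ℝ) := by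
      congr 1
      refine lintegral_congr fun y => ?_
      rw [ENNReal.mul_rpow_of_nonneg _ _ (by norm_num : (0:ℝ) ≤ 2), hsq]
    calc ∫⁻ y, G (x - y) * ‖ψ' y‖₊
        = ∫⁻ y, (G (x - y)) ^ (1/2 : ℝ) * ((G (x - y)) ^ (1/2 : ℝ) * ‖ψ' y‖₊) :=
          (lintegral_congr heq1).symm
      _ ≤ (∫⁻ y, ((G (x - y)) ^ (1/2 : ℝ)) ^ (2:ℝ)) ^ (1/(2:ℝ)) *
          (∫⁻ y, ((G (x - y)) ^ (1/2 : ℝ) * ‖ψ' y‖₊) ^ (2:ℝ)) ^ (1/(2:ℝ)) := this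
      _ = I ^ (1/2 : ℝ) * (∫⁻ y, G (x - y) * (‖ψ' y‖₊ : ℝ≥0∞) ^ (2:ℝ)) ^ (1/2 : ℝ) := by
          rw [heq2, heq3]
  -- square and integrate
  have hsquare : ∀ x : E3, (‖T x‖₊ : ℝ≥0∞) ^ (2:ℝ) ≤
      I * ∫⁻ y, G (x - y) * (‖ψ' y‖₊ : ℝ≥0∞) ^ (2:ℝ) := by
    intro x
    have h1 := le_trans (hpt x) (hH x)
    calc (‖T x‖₊ : ℝ≥0∞) ^ (2:ℝ)
        ≤ (I ^ (1/2 : ℝ) * (∫⁻ y, G (x - y) * (‖ψ' y‖₊ : ℝ≥0∞) ^ (2:ℝ)) ^ (1/2 : ℝ)) ^ (2:ℝ) :=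
          ENNReal.rpow_le_rpow h1 (by norm_num)
      _ = I * ∫⁻ y, G (x - y) * (‖ψ' y‖₊ : ℝ≥0∞) ^ (2:ℝ) := by
          rw [ENNReal.mul_rpow_of_nonneg _ _ (by norm_num : (0:ℝ) ≤ 2), hsq, hsq]
  have hswap : ∫⁻ x, ∫⁻ y, G (x - y) * (‖ψ' y‖₊ : ℝ≥0∞) ^ (2:ℝ) =
      I * ∫⁻ y, (‖ψ' y‖₊ : ℝ≥0∞) ^ (2:ℝ) := by
    have hm : AEMeasurable (fun p : E3 × E3 => G (p.1 - p.2) * (‖ψ' p.2‖₊ : ℝ≥0∞) ^ (2:ℝ))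
        ((volume : Measure E3).prod volume) := by
      exact ((hGmeas.comp (measurable_fst.sub measurable_snd)).mul
        ((hψ'm.measurable.enorm.comp measurable_snd).pow_const _)).aemeasurable
    rw [lintegral_lintegral_swap hm]
    have h1 : ∀ y : E3, ∫⁻ x, G (x - y) * (‖ψ' y‖₊ : ℝ≥0∞) ^ (2:ℝ) =
        I * (‖ψ' y‖₊ : ℝ≥0∞) ^ (2:ℝ) := by
      intro y
      rw [lintegral_mul_const' _ _
        (ENNReal.rpow_ne_top_of_nonneg (by norm_num) ENNReal.coe_ne_top), hGy y]
    calc ∫⁻ y, ∫⁻ x, G (x - y) * (‖ψ' y‖₊ : ℝ≥0∞) ^ (2:ℝ)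
        = ∫⁻ y, I * (‖ψ' y‖₊ : ℝ≥0∞) ^ (2:ℝ) := lintegral_congr h1
      _ = I * ∫⁻ y, (‖ψ' y‖₊ : ℝ≥0∞) ^ (2:ℝ) := lintegral_const_mul' _ _ hI_ne_top
  -- the L² bound
  set L : ℝ≥0∞ := ∫⁻ y, (‖ψ' y‖₊ : ℝ≥0∞) ^ (2:ℝ) with hL_def
  have hmain : ∫⁻ x, (‖T x‖₊ : ℝ≥0∞) ^ (2:ℝ) ≤ I * (I * L) := by
    calc ∫⁻ x, (‖T x‖₊ : ℝ≥0∞) ^ (2:ℝ)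
        ≤ ∫⁻ x, I * ∫⁻ y, G (x - y) * (‖ψ' y‖₊ : ℝ≥0∞) ^ (2:ℝ) :=
          lintegral_mono hsquare
      _ = I * ∫⁻ x, ∫⁻ y, G (x - y) * (‖ψ' y‖₊ : ℝ≥0∞) ^ (2:ℝ) :=
          lintegral_const_mul' _ _ hI_ne_top
      _ = I * (I * L) := by rw [hswap]
  have heLp : ∀ f : E3 → ℂ, eLpNorm f 2 volume =
      (∫⁻ x, (‖f x‖₊ : ℝ≥0∞) ^ (2:ℝ)) ^ (1/2 : ℝ) := by
    intro f
    rw [eLpNorm_eq_lintegral_rpow_enorm_toReal two_ne_zero ENNReal.ofNat_ne_top]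
    norm_num
    rfl
  have hbound : eLpNorm T 2 volume ≤ I * eLpNorm ψ' 2 volume := by
    rw [heLp T, heLp ψ']
    calc (∫⁻ x, (‖T x‖₊ : ℝ≥0∞) ^ (2:ℝ)) ^ (1/2 : ℝ)
        ≤ (I * (I * L)) ^ (1/2 : ℝ) := ENNReal.rpow_le_rpow hmain (by norm_num)
      _ = I * L ^ (1/2 : ℝ) := by
          rw [← mul_assoc, ENNReal.mul_rpow_of_nonneg _ _ (by norm_num : (0:ℝ) ≤ 1/2)]
          congr 1
          rw [show I * I = I ^ (2:ℝ) from by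
            rw [show (2:ℝ) = ((2:ℕ):ℝ) by norm_num, ENNReal.rpow_natCast, sq],
            ← ENNReal.rpow_mul]
          norm_num
  have hψL : eLpNorm ψ 2 volume = eLpNorm ψ' 2 volume := eLpNorm_congr_ae hae
  constructor
  · rw [hTeq]
    exact ⟨hTm, lt_of_le_of_lt hbound
      (ENNReal.mul_lt_top hI_ne_top.lt_top hψ'.2)⟩
  · rw [hTeq, hψL]
    exact hbound


end HFBYukawa
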